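/- arXiv:1802.06973 — 4 statements merged into one kernel-verified Lean document; each statement's English description precedes it below -/
import Mathlib

section
/- Let G be a finite group acting on a finite set Ω, c a positive integer, and X a set of representatives of the conjugacy classes of elements of prime order in G. If Σ_{x ∈ X} |x^G| · (fix(x)/|Ω|)^c < 1, where fix(x) is the number of fixed points of x on Ω, then G has a base of size at most c on Ω. -/
/-!
A tuple `t` fails to be a base iff some element of prime order fixes every entry of `t`, and
then so does a conjugate `g` of some `x ∈ X`. For fixed `x` the tuples fixed entrywise by some
conjugate of `x` number at most `|x^G| · fix(x)^c`, so the hypothesis says that fewer than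
`|Ω|^c` tuples of length `c` are not bases.
-/

open Finset

lemma Nat.card_subtype_exists_mem_le_sum {ι α : Type*} [Finite α] (s : Finset ι)
    (p : ι → α → Prop) :
    Nat.card {a // ∃ i ∈ s, p i a} ≤ ∑ i ∈ s, Nat.card {a // p i a} := by
  classical
  have := Fintype.ofFinite α
  simp only [Nat.card_eq_fintype_card, Fintype.card_subtype]
  refine (card_le_card fun a ha => ?_).trans card_biUnion_le
  simpa using ha

lemma exists_not_of_card_subtype_lt {α : Type*} [Finite α] {p : α → Prop}
    (h : Nat.card {a // p a} < Nat.card α) : ∃ a, ¬ p a := by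
  by_contra! hp
  exact h.ne (Nat.card_congr (Equiv.subtypeUnivEquiv hp))

lemma sum_mul_pow_lt_pow_of_sum_mul_div_pow_lt_one {ι : Type*} (s : Finset ι) (a b : ι → ℕ)
    {N : ℕ} (hN : 0 < N) (c : ℕ) (h : ∑ i ∈ s, (a i : ℝ) * ((b i : ℝ) / N) ^ c < 1) :
    ∑ i ∈ s, a i * b i ^ c < N ^ c := by
  have hNc : (0 : ℝ) < (N : ℝ) ^ c := by positivity
  have hsum : ∑ i ∈ s, (a i : ℝ) * (b i : ℝ) ^ c
      = (∑ i ∈ s, (a i : ℝ) * ((b i : ℝ) / N) ^ c) * (N : ℝ) ^ c := by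
    rw [sum_mul]
    refine sum_congr rfl fun i _ => ?_
    rw [div_pow, mul_assoc, div_mul_cancel₀ _ hNc.ne']
  have : ∑ i ∈ s, (a i : ℝ) * (b i : ℝ) ^ c < (N : ℝ) ^ c := by
    rw [hsum]; simpa using mul_lt_mul_of_pos_right h hNc
  exact_mod_cast this

lemma exists_pow_prime_orderOf {G : Type*} [Group G] {g : G} (hfin : IsOfFinOrder g)
    (hg : g ≠ 1) : ∃ k : ℕ, ∃ p : ℕ, p.Prime ∧ orderOf (g ^ k) = p := by
  have hn : orderOf g ≠ 0 := hfin.orderOf_pos.ne'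
  have hn1 : orderOf g ≠ 1 := by rwa [Ne, orderOf_eq_one_iff]
  exact ⟨_, _, Nat.minFac_prime hn1, orderOf_pow_orderOf_div hn (Nat.minFac_dvd _)⟩

namespace MulAction

variable {G Ω : Type*} [Group G] [MulAction G Ω]

lemma card_fixedPoints_eq_of_isConj {x g : G} (h : IsConj x g) :
    Nat.card {ω : Ω // x • ω = ω} = Nat.card {ω : Ω // g • ω = ω} := by
  obtain ⟨k, hk⟩ := isConj_iff.mp h
  refine Nat.card_congr (Equiv.subtypeEquiv (MulAction.toPerm k) fun ω => ?_)
  have hg : g • (k • ω) = k • (x • ω) := by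
    rw [← hk]; simp [mul_smul]
  show x • ω = ω ↔ g • (k • ω) = k • ω
  rw [hg, smul_left_cancel_iff]

lemma card_pointwise_fixed_tuples (ι : Type*) [Finite ι] (g : G) :
    Nat.card {t : ι → Ω // ∀ i, g • t i = t i} = Nat.card {ω : Ω // g • ω = ω} ^ Nat.card ι := by
  rw [Nat.card_congr (Equiv.subtypePiEquivPi (p := fun _ ω => g • ω = ω)), Nat.card_fun]

lemma card_tuples_fixed_by_conj_le [Finite G] [Finite Ω] (ι : Type*) [Finite ι] (x : G) :
    Nat.card {t : ι → Ω // ∃ g, IsConj x g ∧ ∀ i, g • t i = t i}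
      ≤ Nat.card {g : G // IsConj x g} * Nat.card {ω : Ω // x • ω = ω} ^ Nat.card ι := by
  classical
  have := Fintype.ofFinite G
  calc Nat.card {t : ι → Ω // ∃ g, IsConj x g ∧ ∀ i, g • t i = t i}
      = Nat.card {t : ι → Ω // ∃ g ∈ ({g | IsConj x g} : Finset G), ∀ i, g • t i = t i} := by
        simp
    _ ≤ ∑ g ∈ ({g | IsConj x g} : Finset G), Nat.card {t : ι → Ω // ∀ i, g • t i = t i} :=
        Nat.card_subtype_exists_mem_le_sum _ _
    _ = Nat.card {g : G // IsConj x g} * Nat.card {ω : Ω // x • ω = ω} ^ Nat.card ι := by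
        rw [sum_congr rfl fun g hg => by
          rw [card_pointwise_fixed_tuples, ← card_fixedPoints_eq_of_isConj (mem_filter.mp hg).2],
          sum_const, smul_eq_mul, ← Fintype.card_subtype, Fintype.card_eq_nat_card]

lemma exists_prime_orderOf_fixing [Finite G] {ι : Type*} {t : ι → Ω} {g : G} (hg : g ≠ 1)
    (hfix : ∀ i, g • t i = t i) :
    ∃ h : G, (∃ p : ℕ, p.Prime ∧ orderOf h = p) ∧ ∀ i, h • t i = t i := by
  obtain ⟨k, hk⟩ := exists_pow_prime_orderOf (isOfFinOrder_of_finite g) hg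
  exact ⟨g ^ k, hk, fun i => Subgroup.pow_mem (stabilizer G (t i)) (hfix i) k⟩

end MulAction

theorem stmt_3_general {G Ω : Type*} [Group G] [Fintype G] [Fintype Ω] [Nonempty Ω]
    [MulAction G Ω] (c : ℕ) (X : Finset G)
    (hX2 : ∀ g : G, (∃ p : ℕ, p.Prime ∧ orderOf g = p) → ∃ x ∈ X, IsConj x g)
    (h : ∑ x ∈ X, (Nat.card {g : G // IsConj x g} : ℝ) *
        ((Nat.card {ω : Ω // x • ω = ω} : ℝ) / (Fintype.card Ω : ℝ)) ^ c < 1) :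
    ∃ t : Fin c → Ω, ∀ g : G, (∀ i, g • t i = t i) → g = 1 := by
  obtain ⟨t, ht⟩ : ∃ t : Fin c → Ω, ¬ ∃ x ∈ X, ∃ g, IsConj x g ∧ ∀ i, g • t i = t i := by
    refine exists_not_of_card_subtype_lt ?_
    calc _ ≤ ∑ x ∈ X, Nat.card {t : Fin c → Ω // ∃ g, IsConj x g ∧ ∀ i, g • t i = t i} :=
          Nat.card_subtype_exists_mem_le_sum _ _
      _ ≤ ∑ x ∈ X, Nat.card {g : G // IsConj x g} * Nat.card {ω : Ω // x • ω = ω} ^ c :=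
          sum_le_sum fun x _ => by simpa using MulAction.card_tuples_fixed_by_conj_le (Fin c) x
      _ < Fintype.card Ω ^ c :=
          sum_mul_pow_lt_pow_of_sum_mul_div_pow_lt_one _ _ _ Fintype.card_pos c h
      _ = Nat.card (Fin c → Ω) := by simp
  refine ⟨t, fun g hg => by_contra fun hg1 => ?_⟩
  obtain ⟨y, hy, hyfix⟩ := MulAction.exists_prime_orderOf_fixing hg1 hg
  obtain ⟨x, hx, hxy⟩ := hX2 y hy
  exact ht ⟨x, hx, y, hxy, hyfix⟩

theorem stmt_3 {G Ω : Type*} [Group G] [Fintype G] [Fintype Ω] [Nonempty Ω]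
    [MulAction G Ω] (c : ℕ) (hc : 0 < c) (X : Finset G)
    (hX1 : ∀ x ∈ X, ∃ p : ℕ, p.Prime ∧ orderOf x = p)
    (hX2 : ∀ g : G, (∃ p : ℕ, p.Prime ∧ orderOf g = p) → ∃ x ∈ X, IsConj x g)
    (h : ∑ x ∈ X, (Nat.card {g : G // IsConj x g} : ℝ) *
        ((Nat.card {ω : Ω // x • ω = ω} : ℝ) / (Fintype.card Ω : ℝ)) ^ c < 1) :
    ∃ t : Fin c → Ω, ∀ g : G, (∀ i, g • t i = t i) → g = 1 :=
  stmt_3_general c X hX2 h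
end

section
/- Let V be a 4-dimensional unitary space over F_{q^2} with q odd, with orthonormal basis v_1, v_2, v_3, v_4. Then any unitary transformation of V fixing each of the four 1-dimensional subspaces ⟨v_1⟩, ⟨v_2⟩, ⟨v_3⟩, ⟨v_1+v_2+v_3+v_4⟩ is a scalar transformation. -/
/-!
The fixed lines ⟨v₁⟩, ⟨v₂⟩, ⟨v₃⟩ make v₁, v₂, v₃ eigenvectors, with nonzero eigenvalues since `f`
is invertible. As `f` preserves the form, `f v₄` stays orthogonal to `f vᵢ = aᵢ vᵢ`, so its
`i`-th coordinate vanishes for `i ≤ 3`: `v₄` is an eigenvector too. Thus `f` is diagonal in the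
basis `vᵢ`, and then `f (v₁ + v₂ + v₃ + v₄) = d • (v₁ + v₂ + v₃ + v₄)` forces all the
eigenvalues to equal `d`.
-/

lemma Submodule.exists_smul_of_map_span_singleton_eq {R M : Type*} [Semiring R]
    [AddCommMonoid M] [Module R M] (f : M →ₗ[R] M) {w : M}
    (hw : (Submodule.span R {w}).map f = Submodule.span R {w}) :
    ∃ a : R, f w = a • w := by
  have hfw : f w ∈ Submodule.span R {w} :=
    hw ▸ Submodule.mem_map_of_mem (mem_span_singleton_self w)
  obtain ⟨a, ha⟩ := Submodule.mem_span_singleton.mp hfw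
  exact ⟨a, ha.symm⟩

section Diagonal

variable {ι : Type*} [Fintype ι] [DecidableEq ι]

lemma apply_eq_mul_of_forall_single_apply_eq_zero {R : Type*} [CommSemiring R]
    (f : (ι → R) →ₗ[R] (ι → R)) (hdiag : ∀ i k, k ≠ i → f (Pi.single i 1) k = 0)
    (v : ι → R) (k : ι) :
    f v k = f (Pi.single k 1) k * v k := by
  conv_lhs => rw [pi_eq_sum_univ' v]
  simp only [map_sum, map_smul, Finset.sum_apply, Pi.smul_apply, smul_eq_mul]
  rw [Finset.sum_eq_single k (fun i _ hik => by rw [hdiag i k (Ne.symm hik), mul_zero])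
    (by simp), mul_comm]

variable {F : Type*} [Field F]

/-- The orthogonality `⟨f eᵢ, f eⱼ⟩ = ⟨eᵢ, eⱼ⟩ = 0` reads `a * (f eⱼ i) ^ q = 0`. -/
lemma apply_single_apply_eq_zero_of_preserves_form {q : ℕ} (hq : q ≠ 0)
    (f : (ι → F) →ₗ[F] (ι → F))
    (hunitary : ∀ u v : ι → F, ∑ i, f u i * (f v i) ^ q = ∑ i, u i * (v i) ^ q)
    {i j : ι} (hij : i ≠ j) {a : F} (ha : a ≠ 0) (hi : f (Pi.single i 1) = a • Pi.single i 1) :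
    f (Pi.single j 1) i = 0 := by
  have h := hunitary (Pi.single i 1) (Pi.single j 1)
  simpa [hi, Pi.single_apply, hij.symm, hq, ha] using h

theorem LinearEquiv.exists_eq_smul_of_preserves_form {q : ℕ} (hq : q ≠ 0)
    (f : (ι → F) ≃ₗ[F] (ι → F))
    (hunitary : ∀ u v : ι → F, ∑ i, f u i * (f v i) ^ q = ∑ i, u i * (v i) ^ q) (j : ι)
    (hsingle : ∀ i ≠ j, ∃ a : F, f (Pi.single i 1) = a • Pi.single i 1)
    (hone : ∃ d : F, f 1 = d • 1) :
    ∃ c : F, ∀ v, f v = c • v := by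
  have hdiag : ∀ i k, k ≠ i → f (Pi.single i 1) k = 0 := by
    intro i k hki
    by_cases hij : i = j
    · obtain ⟨a, ha⟩ := hsingle k (hij ▸ hki)
      have ha0 : a ≠ 0 := by
        rintro rfl
        simp at ha
      exact apply_single_apply_eq_zero_of_preserves_form hq f.toLinearMap hunitary (hij ▸ hki)
        ha0 ha
    · obtain ⟨a, ha⟩ := hsingle i hij
      simp [ha, Pi.single_eq_of_ne hki]
  obtain ⟨d, hd⟩ := hone
  have hdiag_one (k : ι) : f (Pi.single k 1) k = d := by
    simpa [hd] using (apply_eq_mul_of_forall_single_apply_eq_zero f.toLinearMap hdiag 1 k).symm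
  refine ⟨d, fun v => funext fun k => ?_⟩
  rw [← hdiag_one k]
  exact apply_eq_mul_of_forall_single_apply_eq_zero f.toLinearMap hdiag v k

end Diagonal

theorem stmt_7_general {F : Type*} [Field F] (q : ℕ) (hodd : Odd q)
    (f : (Fin 4 → F) ≃ₗ[F] (Fin 4 → F))
    (hunitary : ∀ u v : Fin 4 → F, ∑ i, f u i * (f v i) ^ q = ∑ i, u i * (v i) ^ q)
    (hfix : ∀ w ∈ ({Pi.single 0 1, Pi.single 1 1, Pi.single 2 1,
        Pi.single 0 1 + Pi.single 1 1 + Pi.single 2 1 + Pi.single 3 1} :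
        Set (Fin 4 → F)),
      Submodule.map f.toLinearMap (Submodule.span F {w}) = Submodule.span F {w}) :
    ∃ c : F, ∀ v, f v = c • v := by
  have hline (w) (hw) := Submodule.exists_smul_of_map_span_singleton_eq f.toLinearMap (hfix w hw)
  have hsum :
      (Pi.single 0 1 + Pi.single 1 1 + Pi.single 2 1 + Pi.single 3 1 : Fin 4 → F) = 1 := by
    ext k; fin_cases k <;> simp
  refine f.exists_eq_smul_of_preserves_form hodd.pos.ne' hunitary 3 ?_ ?_
  · intro i hi
    fin_cases i
    exacts [hline _ (by simp), hline _ (by simp), hline _ (by simp), absurd rfl hi]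
  · rw [← hsum]
    exact hline _ (by simp)

theorem stmt_7 {F : Type*} [Field F] [Fintype F] (q : ℕ) (hq2 : Fintype.card F = q ^ 2)
    (hodd : Odd q) (hpp : ∃ p k : ℕ, p.Prime ∧ q = p ^ k)
    (f : (Fin 4 → F) ≃ₗ[F] (Fin 4 → F))
    (hunitary : ∀ u v : Fin 4 → F, ∑ i, f u i * (f v i) ^ q = ∑ i, u i * (v i) ^ q)
    (hfix : ∀ w ∈ ({Pi.single 0 1, Pi.single 1 1, Pi.single 2 1,
        Pi.single 0 1 + Pi.single 1 1 + Pi.single 2 1 + Pi.single 3 1} :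
        Set (Fin 4 → F)),
      Submodule.map f.toLinearMap (Submodule.span F {w}) = Submodule.span F {w}) :
    ∃ c : F, ∀ v, f v = c • v :=
  stmt_7_general q hodd f hunitary hfix
end

section
/- Let V be a 4-dimensional unitary space over F_{q^2} with q even, with orthonormal basis v_1, v_2, v_3, v_4. Then any unitary transformation of V fixing each of the five 1-dimensional subspaces ⟨v_1⟩, ⟨v_2⟩, ⟨v_3⟩, ⟨v_1+v_2+v_3⟩, ⟨v_2+v_3+v_4⟩ is a scalar transformation. -/
/-!
Each of the five vectors is an eigenvector of `f`. Comparing coordinates in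
`f (v₁ + v₂ + v₃) = d • (v₁ + v₂ + v₃)` shows that `v₁, v₂, v₃` all have eigenvalue `d`.
Then `f v₄ = e • (v₂ + v₃ + v₄) - d • (v₂ + v₃)`, and since `f` preserves the form and
`f v₂ = d • v₂` with `d ≠ 0` (`f` is invertible), `f v₄` stays orthogonal to `v₂`, i.e. its `v₂`-coordinate `e - d`
vanishes. So `f = d • id` on the basis.
-/

theorem Submodule.exists_smul_eq_of_map_span_singleton_le {R M : Type*} [Semiring R]
    [AddCommMonoid M] [Module R M] {f : M →ₗ[R] M} {w : M}
    (h : (R ∙ w).map f ≤ R ∙ w) : ∃ c : R, f w = c • w := by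
  obtain ⟨c, hc⟩ := Submodule.mem_span_singleton.mp
    (h (Submodule.mem_map_of_mem (Submodule.mem_span_singleton_self w)))
  exact ⟨c, hc.symm⟩

theorem LinearMap.apply_single_eq_smul_of_apply_sum_single {R ι : Type*} [Semiring R]
    [DecidableEq ι] (f : (ι → R) →ₗ[R] (ι → R)) {s : Finset ι} {d : R}
    (hs : ∀ i ∈ s, ∃ c : R, f (Pi.single i 1) = c • Pi.single i 1)
    (hd : f (∑ i ∈ s, Pi.single i 1) = d • ∑ i ∈ s, Pi.single i 1) :
    ∀ i ∈ s, f (Pi.single i 1) = d • Pi.single i 1 := by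
  choose! c hc using hs
  intro i hi
  have hci : c i = d := by
    have := congrFun hd i
    rw [map_sum, Finset.sum_congr rfl hc] at this
    simpa [Finset.sum_apply, Pi.single_apply, hi] using this
  rw [hc i hi, hci]

section
variable {F ι : Type*} [Field F] [Fintype ι] [DecidableEq ι] {q : ℕ}

theorem mul_apply_pow_eq_of_apply_single {f : (ι → F) →ₗ[F] (ι → F)}
    (hf : ∀ u v : ι → F, ∑ j, f u j * (f v j) ^ q = ∑ j, u j * (v j) ^ q)
    {i : ι} {b : F} (hb : f (Pi.single i 1) = b • Pi.single i 1) (v : ι → F) :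
    b * f v i ^ q = v i ^ q := by
  simpa [hb, Pi.single_apply] using hf (Pi.single i 1) v

theorem apply_eq_zero_of_apply_single {f : (ι → F) ≃ₗ[F] (ι → F)} (hq : q ≠ 0)
    (hf : ∀ u v : ι → F, ∑ j, f u j * (f v j) ^ q = ∑ j, u j * (v j) ^ q)
    {i : ι} {b : F} (hb : f (Pi.single i 1) = b • Pi.single i 1) {v : ι → F} (hv : v i = 0) :
    f v i = 0 := by
  have hb0 : b ≠ 0 := by
    rintro rfl
    rw [zero_smul, LinearEquiv.map_eq_zero_iff] at hb
    simpa using congrFun hb i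
  have := mul_apply_pow_eq_of_apply_single (f := f.toLinearMap) hf hb v
  rw [hv, zero_pow hq] at this
  exact pow_eq_zero_iff hq |>.mp ((mul_eq_zero.mp this).resolve_left hb0)

theorem apply_single_eq_smul_of_apply_add_single {f : (ι → F) ≃ₗ[F] (ι → F)} (hq : q ≠ 0)
    (hf : ∀ u v : ι → F, ∑ j, f u j * (f v j) ^ q = ∑ j, u j * (v j) ^ q)
    {i k : ι} (hik : i ≠ k) {d e : F} (hi : f (Pi.single i 1) = d • Pi.single i 1)
    {u : ι → F} (hu : f u = d • u) (hui : u i ≠ 0)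
    (huk : f (u + Pi.single k 1) = e • (u + Pi.single k 1)) :
    f (Pi.single k 1) = d • Pi.single k 1 := by
  have hk : f (Pi.single k 1) = e • (u + Pi.single k 1) - d • u := by
    rw [← huk, map_add, hu, add_sub_cancel_left]
  have hki : f (Pi.single k 1) i = 0 :=
    apply_eq_zero_of_apply_single hq hf hi (Pi.single_eq_of_ne hik _)
  have hed : e = d := by
    rw [hk] at hki
    simp only [Pi.sub_apply, Pi.add_apply, Pi.smul_apply, smul_eq_mul, Pi.single_eq_of_ne hik,
      add_zero] at hki
    exact mul_right_cancel₀ hui (sub_eq_zero.mp hki)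
  rw [hk, hed, smul_add, add_sub_cancel_left]
end

theorem stmt_8_general {F : Type*} [Field F] [Fintype F] (q : ℕ) (hq2 : Fintype.card F = q ^ 2)
    (f : (Fin 4 → F) ≃ₗ[F] (Fin 4 → F))
    (hunitary : ∀ u v : Fin 4 → F, ∑ i, f u i * (f v i) ^ q = ∑ i, u i * (v i) ^ q)
    (hfix : ∀ w ∈ ({Pi.single 0 1, Pi.single 1 1, Pi.single 2 1,
        Pi.single 0 1 + Pi.single 1 1 + Pi.single 2 1,
        Pi.single 1 1 + Pi.single 2 1 + Pi.single 3 1} :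
        Set (Fin 4 → F)),
      Submodule.map f.toLinearMap (Submodule.span F {w}) = Submodule.span F {w}) :
    ∃ c : F, ∀ v, f v = c • v := by
  have hq : q ≠ 0 := by
    rintro rfl
    simp at hq2
  have hline (w) (hw) : ∃ c : F, f w = c • w :=
    Submodule.exists_smul_eq_of_map_span_singleton_le (hfix w hw).le
  obtain ⟨d, hd⟩ := hline (Pi.single 0 1 + Pi.single 1 1 + Pi.single 2 1) (by simp)
  have h012 : ∀ i ∈ ({0, 1, 2} : Finset (Fin 4)), f (Pi.single i 1) = d • Pi.single i 1 :=
    f.toLinearMap.apply_single_eq_smul_of_apply_sum_single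
      (by intro i hi; fin_cases hi <;> exact hline _ (by simp))
      (by simpa [add_assoc] using hd)
  obtain ⟨e, he⟩ := hline (Pi.single 1 1 + Pi.single 2 1 + Pi.single 3 1) (by simp)
  have h3 : f (Pi.single 3 1) = d • Pi.single 3 1 :=
    apply_single_eq_smul_of_apply_add_single hq hunitary (i := 1) (by decide)
      (h012 1 (by simp)) (by rw [map_add, h012 1 (by simp), h012 2 (by simp), smul_add])
      (by simp) he
  have hbasis : ∀ i, f (Pi.single i 1) = d • Pi.single i 1 := by
    intro i
    fin_cases i
    exacts [h012 0 (by simp), h012 1 (by simp), h012 2 (by simp), h3]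
  refine ⟨d, fun v => LinearMap.congr_fun ((Pi.basisFun F (Fin 4)).ext
    (f₁ := f.toLinearMap) (f₂ := d • LinearMap.id) fun i => ?_) v⟩
  simpa using hbasis i

theorem stmt_8 {F : Type*} [Field F] [Fintype F] (q : ℕ) (hq2 : Fintype.card F = q ^ 2)
    (heven : ∃ k : ℕ, q = 2 ^ k)
    (f : (Fin 4 → F) ≃ₗ[F] (Fin 4 → F))
    (hunitary : ∀ u v : Fin 4 → F, ∑ i, f u i * (f v i) ^ q = ∑ i, u i * (v i) ^ q)
    (hfix : ∀ w ∈ ({Pi.single 0 1, Pi.single 1 1, Pi.single 2 1,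
        Pi.single 0 1 + Pi.single 1 1 + Pi.single 2 1,
        Pi.single 1 1 + Pi.single 2 1 + Pi.single 3 1} :
        Set (Fin 4 → F)),
      Submodule.map f.toLinearMap (Submodule.span F {w}) = Submodule.span F {w}) :
    ∃ c : F, ∀ v, f v = c • v :=
  stmt_8_general q hq2 f hunitary hfix
end

section
/- Let X and Y be elements of SL_{n-1}(F) generating SL_{n-1}(F) (F a field, n ≥ 3), and let A = diag(X, -Tr(X)), B = diag(Y, -Tr(Y)) be the block-diagonal n×n trace-zero matrices extending X and Y. Then any g ∈ GL_n(F) satisfying g A g^{-1} = A and g B g^{-1} = B is of the form diag(λ I_{n-1}, μ) for scalars λ, μ ∈ F^×. -/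
/-!
Write `g = [[P, q], [r, s]]` in blocks. Commuting with `diag(Z, t)` says that `P` commutes with
`Z`, that `Z q = t q` and that `r Z = t r`. For a fixed `g`, each of these conditions (with `t`
allowed to depend on `Z`) cuts out a subgroup of `SL_m`; as it contains `X` and `Y`, it is all of
`SL_m`. A matrix commuting with every transvection is scalar, and a transvection `1 + E_ij`
(`i ≠ j`) can only scale a column `q` (or row `r`) if its `j`-th entry vanishes, so `q = r = 0`.
Finally `det g ≠ 0` makes both scalars nonzero.
-/

open Matrix

namespace Matrix

theorem commute_fromBlocks_fromBlocks_zero_zero_iff {l m R : Type*} [Fintype l] [Fintype m]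
    [Ring R] {P Z : Matrix l l R} {q : Matrix l m R} {r : Matrix m l R} {s D : Matrix m m R} :
    Commute (fromBlocks P q r s) (fromBlocks Z 0 0 D) ↔
      Commute P Z ∧ q * D = Z * q ∧ r * Z = D * r ∧ Commute s D := by
  simp [commute_iff_eq, fromBlocks_multiply]

end Matrix

namespace Matrix.SpecialLinearGroup

variable {n o F : Type*} [Fintype n] [DecidableEq n] [Field F]

def centralizerOf (P : Matrix n n F) : Subgroup (SpecialLinearGroup n F) where
  carrier := {W | Commute (W : Matrix n n F) P}
  mul_mem' ha hb := by simpa only [Set.mem_ofPred_eq, coe_mul] using ha.mul_left hb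
  one_mem' := by simpa only [Set.mem_ofPred_eq, coe_one] using Commute.one_left P
  inv_mem' {W} h := by
    have := (show Commute (coeMonoidHom.toHomUnits W : Matrix n n F) P from h).units_inv_left
    rwa [← map_inv, MonoidHom.coe_toHomUnits] at this

def eigenSubgroup (q : Matrix n o F) : Subgroup (SpecialLinearGroup n F) where
  carrier := {W | ∃ c : F, (W : Matrix n n F) * q = c • q}
  mul_mem' := by
    rintro W V ⟨a, ha⟩ ⟨b, hb⟩
    exact ⟨a * b, by rw [coe_mul, Matrix.mul_assoc, hb, Matrix.mul_smul, ha, smul_smul, mul_comm]⟩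
  one_mem' := ⟨1, by simp⟩
  inv_mem' := by
    rintro W ⟨c, hc⟩
    refine ⟨c⁻¹, ?_⟩
    have hq : q = c • (((W⁻¹ : SpecialLinearGroup n F) : Matrix n n F) * q) := by
      rw [← Matrix.mul_smul, ← hc, ← Matrix.mul_assoc, ← coe_mul, inv_mul_cancel, coe_one,
        Matrix.one_mul]
    rcases eq_or_ne c 0 with rfl | hc0
    · rw [zero_smul] at hq; simp [hq]
    · exact ((inv_smul_eq_iff₀ hc0).2 hq).symm

def leftEigenSubgroup (r : Matrix o n F) : Subgroup (SpecialLinearGroup n F) where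
  carrier := {W | ∃ c : F, r * (W : Matrix n n F) = c • r}
  mul_mem' := by
    rintro W V ⟨a, ha⟩ ⟨b, hb⟩
    exact ⟨a * b, by rw [coe_mul, ← Matrix.mul_assoc, ha, Matrix.smul_mul, hb, smul_smul]⟩
  one_mem' := ⟨1, by simp⟩
  inv_mem' := by
    rintro W ⟨c, hc⟩
    refine ⟨c⁻¹, ?_⟩
    have hr : r = c • (r * ((W⁻¹ : SpecialLinearGroup n F) : Matrix n n F)) := by
      rw [← Matrix.smul_mul, ← hc, Matrix.mul_assoc, ← coe_mul, mul_inv_cancel, coe_one,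
        Matrix.mul_one]
    rcases eq_or_ne c 0 with rfl | hc0
    · rw [zero_smul] at hr; simp [hr]
    · exact ((inv_smul_eq_iff₀ hc0).2 hr).symm

theorem eq_zero_of_forall_coe_mul_eq_smul [Nontrivial n] {q : Matrix n o F}
    (h : ∀ W : SpecialLinearGroup n F, ∃ c : F, (W : Matrix n n F) * q = c • q) : q = 0 := by
  ext j u
  obtain ⟨i, hij⟩ := exists_ne j
  obtain ⟨c, hc⟩ := h (transvection hij 1)
  replace hc : Matrix.transvection i j (1 : F) * q = c • q := hc
  have hj : q j u = c * q j u := by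
    simpa [hij.symm] using congrFun (congrFun hc j) u
  have hi : q i u + q j u = c * q i u := by
    simpa using congrFun (congrFun hc i) u
  rcases eq_or_ne c 1 with rfl | hc1
  · simpa using hi
  · exact (mul_eq_zero.1 (by linear_combination -hj : (c - 1) * q j u = 0)).resolve_left
      (sub_ne_zero.2 hc1)

theorem eq_zero_of_forall_mul_coe_eq_smul [Nontrivial n] {r : Matrix o n F}
    (h : ∀ W : SpecialLinearGroup n F, ∃ c : F, r * (W : Matrix n n F) = c • r) : r = 0 := by
  rw [← transpose_eq_zero]
  refine eq_zero_of_forall_coe_mul_eq_smul fun W => ?_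
  obtain ⟨c, hc⟩ := h Wᵀ
  exact ⟨c, by rw [← transpose_transpose (W : Matrix n n F), ← coe_transpose, ← transpose_mul, hc,
    transpose_smul]⟩

theorem mem_range_scalar_of_forall_commute {R : Type*} [CommRing R] {P : Matrix n n R}
    (h : ∀ W : SpecialLinearGroup n R, Commute (W : Matrix n n R) P) :
    P ∈ Set.range (scalar n) :=
  mem_range_scalar_of_commute_transvectionStruct fun t => h t.toSpecialLinearGroup

variable [Fintype o] [DecidableEq o]

theorem exists_eq_fromBlocks_smul_one_of_commute [Nontrivial n] {S : Set (SpecialLinearGroup n F)}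
    (hS : Subgroup.closure S = ⊤) (t : SpecialLinearGroup n F → F) {g : Matrix (n ⊕ o) (n ⊕ o) F}
    (hg : ∀ Z ∈ S, Commute g (fromBlocks (Z : Matrix n n F) 0 0 (t Z • 1))) :
    ∃ a : F, g = fromBlocks (a • 1) 0 0 g.toBlocks₂₂ := by
  have forall_mem : ∀ H : Subgroup (SpecialLinearGroup n F), S ⊆ H → ∀ W, W ∈ H :=
    fun H hH W => (Subgroup.closure_le H).2 hH (hS ▸ Subgroup.mem_top W)
  have hblocks Z (hZ : Z ∈ S) := commute_fromBlocks_fromBlocks_zero_zero_iff.1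
    ((fromBlocks_toBlocks g).symm ▸ hg Z hZ)
  obtain ⟨a, ha⟩ := mem_range_scalar_of_forall_commute
    (forall_mem (centralizerOf g.toBlocks₁₁) fun Z hZ => (hblocks Z hZ).1.symm)
  have hq : g.toBlocks₁₂ = 0 := eq_zero_of_forall_coe_mul_eq_smul
    (forall_mem (eigenSubgroup _) fun Z hZ => ⟨t Z, by simpa using (hblocks Z hZ).2.1.symm⟩)
  have hr : g.toBlocks₂₁ = 0 := eq_zero_of_forall_mul_coe_eq_smul
    (forall_mem (leftEigenSubgroup _) fun Z hZ => ⟨t Z, by simpa using (hblocks Z hZ).2.2.1⟩)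
  refine ⟨a, (fromBlocks_toBlocks g).symm.trans ?_⟩
  rw [← ha, hq, hr, scalar_apply, smul_one_eq_diagonal]

end Matrix.SpecialLinearGroup

theorem stmt_10 {F : Type*} [Field F] (m : ℕ) (hm : 2 ≤ m)
    (X Y : Matrix.SpecialLinearGroup (Fin m) F)
    (hgen : Subgroup.closure {X, Y} = (⊤ : Subgroup (Matrix.SpecialLinearGroup (Fin m) F)))
    (A B : Matrix (Fin m ⊕ Unit) (Fin m ⊕ Unit) F)
    (hA : A = Matrix.fromBlocks (X : Matrix (Fin m) (Fin m) F) 0 0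
        ((-Matrix.trace (X : Matrix (Fin m) (Fin m) F)) • (1 : Matrix Unit Unit F)))
    (hB : B = Matrix.fromBlocks (Y : Matrix (Fin m) (Fin m) F) 0 0
        ((-Matrix.trace (Y : Matrix (Fin m) (Fin m) F)) • (1 : Matrix Unit Unit F)))
    (g : (Matrix (Fin m ⊕ Unit) (Fin m ⊕ Unit) F)ˣ)
    (hgA : (g : Matrix (Fin m ⊕ Unit) (Fin m ⊕ Unit) F) * A *
      ((g⁻¹ : (Matrix (Fin m ⊕ Unit) (Fin m ⊕ Unit) F)ˣ) : Matrix (Fin m ⊕ Unit) (Fin m ⊕ Unit) F) = A)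
    (hgB : (g : Matrix (Fin m ⊕ Unit) (Fin m ⊕ Unit) F) * B *
      ((g⁻¹ : (Matrix (Fin m ⊕ Unit) (Fin m ⊕ Unit) F)ˣ) : Matrix (Fin m ⊕ Unit) (Fin m ⊕ Unit) F) = B) :
    ∃ lam mu : Fˣ, (g : Matrix (Fin m ⊕ Unit) (Fin m ⊕ Unit) F) =
      Matrix.fromBlocks ((lam : F) • (1 : Matrix (Fin m) (Fin m) F)) 0 0
        ((mu : F) • (1 : Matrix Unit Unit F)) := by
  have : Nontrivial (Fin m) := Fin.nontrivial_iff_two_le.2 hm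
  have hcomm : ∀ Z ∈ ({X, Y} : Set (SpecialLinearGroup (Fin m) F)),
      Commute (g : Matrix (Fin m ⊕ Unit) (Fin m ⊕ Unit) F)
        (fromBlocks (Z : Matrix (Fin m) (Fin m) F) 0 0 ((-trace (Z : Matrix (Fin m) (Fin m) F)) • 1)) := by
    rintro Z (rfl | rfl)
    · exact hA ▸ (Units.mul_inv_eq_iff_eq_mul g).1 hgA
    · exact hB ▸ (Units.mul_inv_eq_iff_eq_mul g).1 hgB
  obtain ⟨a, hg⟩ := SpecialLinearGroup.exists_eq_fromBlocks_smul_one_of_commute hgen _ hcomm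
  have hdet := (isUnit_iff_isUnit_det _).1 g.isUnit
  rw [hg, det_fromBlocks_zero₂₁, det_smul, det_one, det_unique, Fintype.card_fin, mul_one,
    isUnit_iff_ne_zero, mul_ne_zero_iff, pow_ne_zero_iff (by omega)] at hdet
  refine ⟨Units.mk0 a hdet.1, Units.mk0 _ hdet.2, hg.trans ?_⟩
  congr
  ext ⟨⟩ ⟨⟩
  simp
end
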